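/- arXiv:2405.00853 — 3 statements merged into one kernel-verified Lean document; each statement's English description precedes it below -/
import Mathlib

section
/- Let G = (V,E) be a finite simple connected graph and H ⊆ V. Then H is a monophonic halfspace of G (i.e., both H and V∖H are m-convex) if and only if the induced subgraphs G[Γ(H)] and G[Γ(V∖H)] are cliques. -/
open SimpleGraph

variable {V : Type*}

/-- A walk is an induced (chordless) path. -/
def IsInducedPath (G : SimpleGraph V) {x y : V} (p : G.Walk x y) : Prop :=
  p.IsPath ∧ ∀ a b : V, a ∈ p.support → b ∈ p.support → G.Adj a b → s(a, b) ∈ p.edges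

/-- The monophonic interval between `u` and `v`: all vertices on some induced
path between `u` and `v` (empty if `u = v`). -/
def mInterval (G : SimpleGraph V) (u v : V) : Set V :=
  {z | u ≠ v ∧ ∃ p : G.Walk u v, IsInducedPath G p ∧ z ∈ p.support}

/-- Monophonic convexity. -/
def MConvex (G : SimpleGraph V) (C : Set V) : Prop :=
  ∀ x ∈ C, ∀ y ∈ C, mInterval G x y ⊆ C

/-- Monophonic halfspace. -/
def IsMHalfspace (G : SimpleGraph V) (H : Set V) : Prop :=
  MConvex G H ∧ MConvex G Hᶜ

/-- The monophonic shadow `u/v`. -/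
def mShadow (G : SimpleGraph V) (u v : V) : Set V :=
  {z | u ∈ mInterval G z v}

/-- The border `Γ(X)`: vertices of `X` with a neighbour outside `X`. -/
def border (G : SimpleGraph V) (X : Set V) : Set V :=
  {x | x ∈ X ∧ ∃ y, y ∉ X ∧ G.Adj x y}

/-- `△⁻uv = N(u) ∩ N(v)`. -/
def triMinus (G : SimpleGraph V) (u v : V) : Set V :=
  G.neighborSet u ∩ G.neighborSet v

/-- `△uv = (N(u) ∩ N(v)) ∪ {u, v}`. -/
def triangleSet (G : SimpleGraph V) (u v : V) : Set V :=
  (G.neighborSet u ∩ G.neighborSet v) ∪ {u, v}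

/-- `□uv`: vertices appearing in some 4-cycle of `G` having `{u,v}` as an edge. -/
def squareSet (G : SimpleGraph V) (u v : V) : Set V :=
  {x | ∃ a b : V, G.Adj v a ∧ G.Adj a b ∧ G.Adj b u ∧
    a ≠ u ∧ a ≠ v ∧ b ≠ u ∧ b ≠ v ∧ a ≠ b ∧ (x = u ∨ x = v ∨ x = a ∨ x = b)}

/-- `A = □uv \ △⁻uv`. -/
def setA (G : SimpleGraph V) (u v : V) : Set V :=
  squareSet G u v \ triMinus G u v

/-- `Aᵘ = {x ∈ A : d(x,u) < d(x,v)}`. -/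
noncomputable def setAu (G : SimpleGraph V) (u v : V) : Set V :=
  {x ∈ setA G u v | G.dist x u < G.dist x v}

/-- `Aᵛ = A \ Aᵘ`. -/
noncomputable def setAv (G : SimpleGraph V) (u v : V) : Set V :=
  setA G u v \ setAu G u v

/-- The graph obtained from `G` by deleting all edges of the induced subgraph `G[S]`. -/
def delInduced (G : SimpleGraph V) (S : Set V) : SimpleGraph V where
  Adj a b := G.Adj a b ∧ ¬(a ∈ S ∧ b ∈ S)
  symm := by
    constructor
    intro a b h
    exact ⟨h.1.symm, fun hc => h.2 ⟨hc.2, hc.1⟩⟩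
  loopless := ⟨fun a h => G.irrefl h.1⟩

/-- The graph `T = G \ E(G[□uv ∪ △⁻uv])`. -/
def graphT (G : SimpleGraph V) (u v : V) : SimpleGraph V :=
  delInduced G (squareSet G u v ∪ triMinus G u v)

/-- The monophonic convex hull of `X`. -/
def mHull (G : SimpleGraph V) (X : Set V) : Set V :=
  ⋂₀ {C | MConvex G C ∧ X ⊆ C}

/-- `S` is an `(a,b)`-separator: every walk from `a` to `b` meets `S`. -/
def IsSeparator (G : SimpleGraph V) (S : Set V) (a b : V) : Prop :=
  ∀ p : G.Walk a b, ∃ s ∈ S, s ∈ p.support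

/-- The cutset `δ(X)` as a set of edges. -/
def cutset (G : SimpleGraph V) (X : Set V) : Set (Sym2 V) :=
  {e | e ∈ G.edgeSet ∧ ∃ a b : V, e = s(a, b) ∧ a ∈ X ∧ b ∉ X}

/-- A family of sets `ℋ` shatters a set `S`. -/
def Shatters (ℋ : Set (Set V)) (S : Set V) : Prop :=
  ∀ T ⊆ S, ∃ H ∈ ℋ, H ∩ S = T

/-- `G` is `S₄` for monophonic convexity: disjoint m-convex sets are
halfspace separable. -/
def IsS4 (G : SimpleGraph V) : Prop :=
  ∀ C₁ C₂ : Set V, MConvex G C₁ → MConvex G C₂ → Disjoint C₁ C₂ →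
    ∃ H : Set V, IsMHalfspace G H ∧ C₁ ⊆ H ∧ C₂ ⊆ Hᶜ

namespace SimpleGraph.Walk

variable {G : SimpleGraph V} {u v : V}

/-- A chord `xy` shortcuts the stretch of `p` between its endpoints, which has length at least
two since `xy` is not an edge of `p`. -/
theorem exists_length_lt_of_adj_of_notMem_edges (p : G.Walk u v) {x y : V}
    (hx : x ∈ p.support) (hy : y ∈ p.support) (hxy : G.Adj x y) (hxy' : s(x, y) ∉ p.edges) :
    ∃ q : G.Walk u v, q.length < p.length ∧ q.support ⊆ p.support := by
  obtain ⟨i, rfl, hi⟩ := mem_support_iff_exists_getVert.mp hx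
  obtain ⟨j, rfl, hj⟩ := mem_support_iff_exists_getVert.mp hy
  clear hx hy
  wlog hij : i < j generalizing i j
  · refine this j hj i hi hxy.symm (by rwa [Sym2.eq_swap]) ?_
    exact lt_of_le_of_ne (not_lt.mp hij) fun h => hxy.ne (h ▸ rfl)
  have hgap : i + 1 < j := by
    by_contra hle
    obtain rfl : j = i + 1 := by omega
    exact hxy' ((mk_mem_edges_iff_exists p).mpr ⟨i, by omega, rfl⟩)
  refine ⟨(p.take i).append (cons hxy (p.drop j)), ?_, ?_⟩
  · simp only [length_append, length_cons, take_length, drop_length]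
    omega
  · intro w hw
    rw [mem_support_append_iff, support_cons, List.mem_cons] at hw
    rcases hw with hw | rfl | hw
    · exact (p.isSubwalk_take i).support_subset hw
    · exact getVert_mem_support p i
    · exact (p.isSubwalk_drop j).support_subset hw

theorem exists_isInducedPath_support_subset (p : G.Walk u v) :
    ∃ q : G.Walk u v, IsInducedPath G q ∧ q.support ⊆ p.support := by
  induction hn : p.length using Nat.strong_induction_on generalizing p with
  | _ n ih =>
    classical
    by_cases hind : IsInducedPath G p.bypass
    · exact ⟨p.bypass, hind, p.support_bypass_subset_support⟩
    obtain ⟨x, y, hx, hy, hxy, hxy'⟩ : ∃ x y, x ∈ p.bypass.support ∧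
        y ∈ p.bypass.support ∧ G.Adj x y ∧ s(x, y) ∉ p.bypass.edges := by
      simpa [IsInducedPath, p.bypass_isPath] using hind
    obtain ⟨q, hqlt, hqsub⟩ :=
      p.bypass.exists_length_lt_of_adj_of_notMem_edges hx hy hxy hxy'
    obtain ⟨r, hr, hrsub⟩ := ih q.length (hn ▸ hqlt.trans_le p.length_bypass_le_length) q rfl
    exact ⟨r, hr, fun w hw => p.support_bypass_subset_support (hqsub (hrsub hw))⟩

end SimpleGraph.Walk

section

variable {G : SimpleGraph V} {H : Set V}

theorem MConvex.support_subset {C : Set V} (hC : MConvex G C) {x y : V} (hx : x ∈ C)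
    (hy : y ∈ C) {p : G.Walk x y} (hp : IsInducedPath G p) : ∀ z ∈ p.support, z ∈ C := by
  intro z hz
  by_cases hxy : x = y
  · subst hxy
    rw [Walk.nil_iff_support_eq.mp (Walk.isPath_iff_nil.mp hp.1), List.mem_singleton] at hz
    exact hz ▸ hx
  · exact hC x hx y hy ⟨hxy, p, hp, hz⟩

theorem IsMHalfspace.compl (hH : IsMHalfspace G H) : IsMHalfspace G Hᶜ :=
  ⟨hH.2, by rw [compl_compl]; exact hH.1⟩

/-- If border vertices `a, b` of `H` were non-adjacent, an induced `a`–`b` path inside `a`, `b`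
and an induced path in `Hᶜ` joining their outside neighbours would leave `H` at its second
vertex. -/
theorem IsMHalfspace.isClique_border (hG : G.Connected) (hH : IsMHalfspace G H) :
    G.IsClique (border G H) := by
  rintro a ⟨haH, a', ha', haa'⟩ b ⟨hbH, b', hb', hbb'⟩ hab
  by_contra hnadj
  obtain ⟨Q, hQ, -⟩ := (hG.preconnected a' b').some.exists_isInducedPath_support_subset
  have hQH := hH.2.support_subset ha' hb' hQ
  obtain ⟨S, hS, hSsub⟩ :=
    (Walk.cons haa' (Q.concat hbb'.symm)).exists_isInducedPath_support_subset
  cases S with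
  | nil => exact hab rfl
  | @cons _ c _ hac S' =>
    have hcH : c ∈ H := hH.1 a haH b hbH ⟨hab, _, hS, by simp⟩
    have hc : c ∈ (Walk.cons haa' (Q.concat hbb'.symm)).support := hSsub (by simp)
    simp only [Walk.support_cons, Walk.support_concat, List.mem_cons,
      List.mem_append, List.not_mem_nil, or_false] at hc
    rcases hc with rfl | hcQ | rfl
    · exact hac.ne rfl
    · exact hQH c hcQ hcH
    · exact hnadj hac

/-- An induced path from `H` through `z ∉ H` back to `H` leaves `H` at some `a` before `z` and
re-enters it at some `b` after `z`; the chord `ab` would have to be an edge of the path. -/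
theorem MConvex.of_isClique_border (hclique : G.IsClique (border G H)) : MConvex G H := by
  rintro x hx y hy z ⟨-, p, ⟨hp, hchord⟩, hz⟩
  by_contra hzH
  obtain ⟨q, r, -, -, rfl⟩ := hp.mem_support_iff_exists_append.mp hz
  obtain ⟨d, hd, hdH, hdH'⟩ := q.exists_boundary_dart H hx hzH
  obtain ⟨e, he, heH', heH⟩ := r.exists_boundary_dart Hᶜ hzH (by simpa using hy)
  rw [Set.notMem_compl_iff] at heH
  have ha := q.dart_fst_mem_support_of_mem_darts hd
  have hb := r.dart_snd_mem_support_of_mem_darts he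
  have hbz : e.snd ≠ z := fun h => hzH (h ▸ heH)
  have hab : G.Adj d.fst e.snd := hclique ⟨hdH, _, hdH', d.adj⟩ ⟨heH, _, heH', e.adj.symm⟩
    (hp.ne_of_mem_support_of_append hbz ha hb)
  have hedge := hchord _ _ ((q.mem_support_append_iff r).mpr (.inl ha))
    ((q.mem_support_append_iff r).mpr (.inr hb)) hab
  rw [Walk.edges_append, List.mem_append] at hedge
  rcases hedge with hq | hr
  · exact hp.ne_of_mem_support_of_append hbz (q.snd_mem_support_of_mem_edges hq) hb rfl
  · exact hp.ne_of_mem_support_of_append (fun h => hzH (h ▸ hdH)) ha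
      (r.fst_mem_support_of_mem_edges hr) rfl

end

theorem mhalfspace_iff_borders_clique_general (G : SimpleGraph V)
    (hG : G.Connected) (H : Set V) :
    IsMHalfspace G H ↔ G.IsClique (border G H) ∧ G.IsClique (border G Hᶜ) :=
  ⟨fun hH => ⟨hH.isClique_border hG, hH.compl.isClique_border hG⟩,
    fun ⟨h, hc⟩ => ⟨.of_isClique_border h, .of_isClique_border hc⟩⟩

/-- `H` is a monophonic halfspace of `G` iff the borders
`Γ(H)` and `Γ(V∖H)` induce cliques. -/
theorem mhalfspace_iff_borders_clique [Fintype V] (G : SimpleGraph V)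
    (hG : G.Connected) (H : Set V) :
    IsMHalfspace G H ↔ G.IsClique (border G H) ∧ G.IsClique (border G Hᶜ) :=
  mhalfspace_iff_borders_clique_general G hG H
end

section
/- Let G = (V,E) be a finite simple connected graph with m = |E| edges and clique number ω(G). Then the number of monophonic halfspaces of G satisfies |ℋm(G)| ≤ 4·m·2^{ω(G)}/ω(G) + 2; equivalently, ω(G)·(|ℋm(G)| − 2) ≤ 4·m·2^{ω(G)}. -/
/-!
A nontrivial m-halfspace `H` is cut by some dart `uv` (`u ∈ H`, `v ∉ H`), and it is determined by
its trace on `Δ = N(u) ∩ N(v)`: the border of `Hᶜ` is a clique, so walking inside `H` towards `u`,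
the last vertex outside another such halfspace `H'` is a common neighbour of `u` and `v`. Two
non-adjacent vertices `a, b ∈ Δ` lie on opposite sides of `H`, since `u` and `v` lie on the
induced paths `a u b` and `a v b`; so the trace on a maximal clique `K` of `G[Δ]` determines `H`,
and at most `2^|K|` halfspaces are cut by `uv`, where `|K| ≤ min(ω, |Δ|)`. Conversely the cut of
`H` contains at least `|Δ| + 1` darts. Charging each halfspace `1/|δ(H)|` to each of its cut darts
gives `|ℋ| - 2 ≤ Σ_{uv} 2^|K| / (|Δ| + 1) ≤ 2m · 2^(ω+1) / ω`.
-/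

open SimpleGraph

variable {V : Type*}

namespace SimpleGraph

variable {G : SimpleGraph V}

theorem isInducedPath_nil {x : V} : IsInducedPath G (Walk.nil : G.Walk x x) :=
  ⟨Walk.IsPath.nil, fun a b ha hb hab => by
    simp only [Walk.support_nil, List.mem_singleton] at ha hb
    exact absurd (ha ▸ hb ▸ hab) G.irrefl⟩

theorem IsInducedPath.cons {x w y : V} {h : G.Adj x w} {q : G.Walk w y}
    (hq : IsInducedPath G q) (hx : x ∉ q.support) (hchord : ∀ b ∈ q.support, G.Adj x b → b = w) :
    IsInducedPath G (Walk.cons h q) := by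
  refine ⟨hq.1.cons hx, fun a b ha hb hab => ?_⟩
  rw [Walk.support_cons, List.mem_cons] at ha hb
  rw [Walk.edges_cons, List.mem_cons]
  rcases ha with rfl | ha <;> rcases hb with rfl | hb
  · exact absurd hab G.irrefl
  · exact .inl (by rw [hchord b hb hab])
  · exact .inl (by rw [hchord a ha hab.symm, Sym2.eq_swap])
  · exact .inr (hq.2 a b ha hb hab)

theorem Walk.exists_isInducedPath {x y : V} (p : G.Walk x y) :
    ∃ q : G.Walk x y, IsInducedPath G q ∧ q.support ⊆ p.support ∧ q.length ≤ p.length := by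
  classical
  induction hn : p.length using Nat.strong_induction_on generalizing x with
  | _ n ih =>
  cases p with
  | nil => exact ⟨nil, isInducedPath_nil, List.Subset.refl _, Nat.zero_le _⟩
  | @cons _ w _ h p' =>
    subst hn
    have hsub : p'.support ⊆ (cons h p').support := List.subset_cons_self _ _
    obtain ⟨q', hq', hq'p', hq'len⟩ := ih p'.length (by simp) p' rfl
    by_cases hx : x ∈ q'.support
    · have hdrop := q'.length_dropUntil_le_length hx
      obtain ⟨q, hq, hqs, hqlen⟩ := ih _ (by simp; omega) (q'.dropUntil x hx) rfl
      exact ⟨q, hq, fun z hz => hsub (hq'p' (q'.support_dropUntil_subset_support hx (hqs hz))),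
        by simp; omega⟩
    by_cases hchord : ∃ b ∈ q'.support, G.Adj x b ∧ b ≠ w
    · obtain ⟨b, hb, hxb, hbw⟩ := hchord
      have hshort := length_dropUntil_lt_length hb hbw
      obtain ⟨q, hq, hqs, hqlen⟩ := ih _ (by simp; omega) (cons hxb (q'.dropUntil b hb)) rfl
      refine ⟨q, hq, fun z hz => ?_, by simp at hqlen ⊢; omega⟩
      rcases List.mem_cons.mp (hqs hz) with rfl | hz
      · exact start_mem_support _
      · exact hsub (hq'p' (q'.support_dropUntil_subset_support hb hz))
    · push Not at hchord
      exact ⟨cons h q', hq'.cons hx hchord, List.cons_subset_cons _ hq'p', by simpa⟩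

theorem MConvex.exists_walk_support_subset (hG : G.Preconnected) {C : Set V} (hC : MConvex G C)
    {x y : V} (hx : x ∈ C) (hy : y ∈ C) : ∃ p : G.Walk x y, ∀ z ∈ p.support, z ∈ C := by
  obtain rfl | hxy := eq_or_ne x y
  · exact ⟨.nil, by simpa using hx⟩
  obtain ⟨q, hq, -⟩ := (hG x y).some.exists_isInducedPath
  exact ⟨q, fun z hz => hC x hx y hy ⟨hxy, q, hq, hz⟩⟩

theorem mem_mInterval_of_adj_of_adj {x y w : V} (hxy : x ≠ y) (hnadj : ¬G.Adj x y)
    (hxw : G.Adj x w) (hwy : G.Adj w y) : w ∈ mInterval G x y := by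
  refine ⟨hxy, .cons hxw (.cons hwy .nil), ⟨?_, fun a b ha hb hab => ?_⟩, by simp⟩
  · simp [hxw.ne, hwy.ne, hxy]
  · simp only [Walk.support_cons, Walk.support_nil, List.mem_cons, List.not_mem_nil,
      or_false] at ha hb
    simp only [Walk.edges_cons, Walk.edges_nil, List.mem_cons, List.not_mem_nil, or_false]
    rcases ha with rfl | rfl | rfl <;> rcases hb with rfl | rfl | rfl <;>
      simp_all [Sym2.eq_swap, adj_comm]

theorem MConvex.adj_of_adj_of_notMem {C : Set V} (hC : MConvex G C) {v a b : V} (hv : v ∉ C)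
    (ha : a ∈ C) (hb : b ∈ C) (hab : a ≠ b) (hva : G.Adj v a) (hvb : G.Adj v b) : G.Adj a b :=
  by_contra fun hnadj => hv (hC a ha b hb (mem_mInterval_of_adj_of_adj hab hnadj hva.symm hvb))

namespace IsMHalfspace

variable {H : Set V}

theorem isClique_border_compl (hG : G.Preconnected) (hH : IsMHalfspace G H) :
    G.IsClique (border G Hᶜ) := by
  rintro x ⟨hx, x', hx', hxx'⟩ y ⟨hy, y', hy', hyy'⟩ hxy
  by_contra hnadj
  rw [Set.notMem_compl_iff] at hx' hy'
  obtain ⟨p, hp⟩ := hH.1.exists_walk_support_subset hG hx' hy'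
  obtain ⟨q, hq, hqs, -⟩ := (Walk.cons hxx' (p.concat hyy'.symm)).exists_isInducedPath
  -- the second vertex of an induced `x`–`y` path lies in `Hᶜ` by convexity, but also on `p`
  have hnil : ¬q.Nil := Walk.not_nil_of_ne hxy
  have hz : q.snd ∈ Hᶜ := hH.2 x hx y hy ⟨hxy, q, hq, q.getVert_mem_support 1⟩
  have hzx : q.snd ≠ x := (q.adj_snd hnil).ne.symm
  have hzy : q.snd ≠ y := fun h => hnadj (h ▸ q.adj_snd hnil)
  have := hqs (q.getVert_mem_support 1)
  simp only [Walk.support_cons, Walk.support_concat, List.mem_cons, List.mem_append,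
    List.not_mem_nil, or_false] at this
  rcases this with h | h | h
  exacts [hzx h, hz (hp _ h), hzy h]

theorem mem_iff_notMem_of_not_adj (hH : IsMHalfspace G H) {u v a b : V} (hu : u ∈ H) (hv : v ∉ H)
    (ha : a ∈ G.commonNeighbors u v) (hb : b ∈ G.commonNeighbors u v) (hab : a ≠ b)
    (hnadj : ¬G.Adj a b) : a ∈ H ↔ b ∉ H := by
  rw [mem_commonNeighbors] at ha hb
  refine ⟨fun haH hbH => hv (hH.1 a haH b hbH ?_), fun hbH => by_contra fun haH =>
    hH.2 a haH b hbH ?_ hu⟩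
  · exact mem_mInterval_of_adj_of_adj hab hnadj ha.2.symm hb.2
  · exact mem_mInterval_of_adj_of_adj hab hnadj ha.1.symm hb.1

theorem subset_of_forall_commonNeighbors (hG : G.Preconnected) {H' : Set V}
    (hH : IsMHalfspace G H) (hH' : IsMHalfspace G H') {u v : V} (huv : G.Adj u v) (hu : u ∈ H)
    (hu' : u ∈ H') (hv : v ∉ H) (hv' : v ∉ H')
    (hagree : ∀ x ∈ G.commonNeighbors u v, x ∈ H → x ∈ H') : H ⊆ H' := by
  intro z hz
  by_contra hz'
  obtain ⟨p, hp⟩ := hH.1.exists_walk_support_subset hG hz hu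
  obtain ⟨d, hd, hc, hd'⟩ := p.exists_boundary_dart H'ᶜ hz' (by simpa using hu')
  set c := d.fst
  have hcH : c ∈ H := hp c (p.dart_fst_mem_support_of_mem_darts hd)
  have hcv : G.Adj c v := hH'.isClique_border_compl hG ⟨hc, d.snd, hd', d.adj⟩
    ⟨hv', u, by simpa using hu', huv.symm⟩ (fun h => hv (h ▸ hcH))
  have hcu : G.Adj c u := hH.1.adj_of_adj_of_notMem hv hcH hu (fun h => hc (h ▸ hu'))
    hcv.symm huv.symm
  exact hc (hagree c ⟨hcu.symm, hcv.symm⟩ hcH)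

theorem eq_of_inter_eq_of_forall_exists_not_adj (hG : G.Preconnected) {H' : Set V}
    (hH : IsMHalfspace G H) (hH' : IsMHalfspace G H') {u v : V} (huv : G.Adj u v) (hu : u ∈ H)
    (hu' : u ∈ H') (hv : v ∉ H) (hv' : v ∉ H') {K : Set V} (hKs : K ⊆ G.commonNeighbors u v)
    (hK : ∀ x ∈ G.commonNeighbors u v, x ∉ K → ∃ b ∈ K, x ≠ b ∧ ¬G.Adj x b)
    (hHK : H ∩ K = H' ∩ K) : H = H' := by
  have hagree : ∀ x ∈ G.commonNeighbors u v, x ∈ H ↔ x ∈ H' := by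
    intro x hx
    by_cases hxK : x ∈ K
    · simpa [hxK] using Set.ext_iff.mp hHK x
    obtain ⟨b, hbK, hxb, hnadj⟩ := hK x hx hxK
    have hb : b ∈ H ↔ b ∈ H' := by simpa [hbK] using Set.ext_iff.mp hHK b
    rw [hH.mem_iff_notMem_of_not_adj hu hv hx (hKs hbK) hxb hnadj,
      hH'.mem_iff_notMem_of_not_adj hu' hv' hx (hKs hbK) hxb hnadj, hb]
  exact (hH.subset_of_forall_commonNeighbors hG hH' huv hu hu' hv hv' fun x hx =>
    (hagree x hx).1).antisymm (hH'.subset_of_forall_commonNeighbors hG hH huv hu' hu hv' hv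
      fun x hx => (hagree x hx).2)

end IsMHalfspace

theorem exists_isClique_subset_forall_exists_not_adj [Finite V] (s : Set V) :
    ∃ K : Finset V, ↑K ⊆ s ∧ G.IsClique (K : Set V) ∧
      ∀ x ∈ s, x ∉ K → ∃ b ∈ K, x ≠ b ∧ ¬G.Adj x b := by
  classical
  obtain ⟨K, -, ⟨hKs, hK⟩, hmax⟩ :=
    Finite.exists_le_maximal (p := fun K : Finset V => ↑K ⊆ s ∧ G.IsClique (K : Set V))
      (a := ∅) (by simp)
  refine ⟨K, hKs, hK, fun x hx hxK => ?_⟩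
  by_contra! hall
  have hins : ↑(insert x K) ⊆ s ∧ G.IsClique (↑(insert x K) : Set V) := by
    rw [Finset.coe_insert]
    exact ⟨Set.insert_subset hx hKs, hK.insert fun b hb hxb => hall b hb hxb⟩
  exact hxK (hmax hins (Finset.subset_insert x K) (Finset.mem_insert_self x K))

end SimpleGraph

open Finset

theorem Nat.two_pow_mul_le {k s n : ℕ} (hks : k ≤ s) (hkn : k ≤ n) :
    2 ^ k * n ≤ 2 * (s + 1) * 2 ^ n := by
  obtain ⟨d, rfl⟩ := Nat.exists_eq_add_of_le hkn
  have hd : d + 1 ≤ 2 ^ d := d.lt_two_pow_self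
  calc 2 ^ k * (k + d) ≤ 2 ^ k * (2 * (s + 1) * 2 ^ d) := by gcongr; nlinarith
    _ = 2 * (s + 1) * 2 ^ (k + d) := by ring

theorem Finset.card_le_sum_card_bipartiteBelow_div {α β R : Type*} [Field R] [LinearOrder R]
    [IsStrictOrderedRing R] (r : α → β → Prop) [∀ a b, Decidable (r a b)] {s : Finset α}
    {t : Finset β} (w : β → R) (hne : ∀ a ∈ s, (t.bipartiteAbove r a).Nonempty)
    (hw : ∀ a ∈ s, ∀ b ∈ t.bipartiteAbove r a, 0 < w b ∧ w b ≤ #(t.bipartiteAbove r a)) :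
    (#s : R) ≤ ∑ b ∈ t, #(s.bipartiteBelow r b) / w b := by
  calc (#s : R) = ∑ a ∈ s, 1 := by simp
    _ ≤ ∑ a ∈ s, ∑ b ∈ t.bipartiteAbove r a, 1 / w b := by
      refine sum_le_sum fun a ha => ?_
      have hpos : (0 : R) < #(t.bipartiteAbove r a) := by exact_mod_cast (hne a ha).card_pos
      calc (1 : R) = ∑ b ∈ t.bipartiteAbove r a, 1 / (#(t.bipartiteAbove r a) : R) := by
            rw [sum_const, nsmul_eq_mul, mul_one_div_cancel hpos.ne']
        _ ≤ _ := sum_le_sum fun b hb => one_div_le_one_div_of_le (hw a ha b hb).1 (hw a ha b hb).2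
    _ = ∑ b ∈ t, ∑ a ∈ s.bipartiteBelow r b, 1 / w b :=
      sum_sum_bipartiteAbove_eq_sum_sum_bipartiteBelow r _
    _ = ∑ b ∈ t, #(s.bipartiteBelow r b) / w b := by simp [div_eq_mul_inv]

namespace SimpleGraph

variable {G : SimpleGraph V} [Fintype V]

theorem exists_isClique_card_filter_separating_le (hG : G.Preconnected) {u v : V}
    (huv : G.Adj u v) (N : Finset (Set V)) (hN : ∀ H ∈ N, IsMHalfspace G H)
    [DecidablePred fun H : Set V => u ∈ H ∧ v ∉ H] :
    ∃ K : Finset V, ↑K ⊆ G.commonNeighbors u v ∧ G.IsClique (K : Set V) ∧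
      #{H ∈ N | u ∈ H ∧ v ∉ H} ≤ 2 ^ #K := by
  classical
  obtain ⟨K, hKs, hK, hmax⟩ :=
    exists_isClique_subset_forall_exists_not_adj (G := G) (G.commonNeighbors u v)
  refine ⟨K, hKs, hK, ?_⟩
  calc #{H ∈ N | u ∈ H ∧ v ∉ H} ≤ #K.powerset := by
        refine card_le_card_of_injOn (fun H => {x ∈ K | x ∈ H})
          (fun H _ => mem_powerset.mpr (filter_subset _ _)) ?_
        intro H hH H' hH' htr
        simp only [coe_filter, Set.mem_ofPred_eq] at hH hH'
        refine (hN H hH.1).eq_of_inter_eq_of_forall_exists_not_adj hG (hN H' hH'.1) huv hH.2.1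
          hH'.2.1 hH.2.2 hH'.2.2 hKs hmax ?_
        ext x
        simpa [and_comm] using congrArg (x ∈ ·) htr
    _ = 2 ^ #K := card_powerset K

theorem card_filter_separating_mul_cliqueNum_le (hG : G.Preconnected) {u v : V}
    (huv : G.Adj u v) (N : Finset (Set V)) (hN : ∀ H ∈ N, IsMHalfspace G H)
    [DecidablePred fun H : Set V => u ∈ H ∧ v ∉ H] :
    #{H ∈ N | u ∈ H ∧ v ∉ H} * G.cliqueNum ≤
      2 * ((G.commonNeighbors u v).ncard + 1) * 2 ^ G.cliqueNum := by
  obtain ⟨K, hKs, hK, hcard⟩ := exists_isClique_card_filter_separating_le hG huv N hN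
  have hKs' : #K ≤ (G.commonNeighbors u v).ncard := by
    rw [← Set.ncard_coe_finset]
    exact Set.ncard_le_ncard hKs
  calc _ ≤ 2 ^ #K * G.cliqueNum := Nat.mul_le_mul_right _ hcard
    _ ≤ _ := Nat.two_pow_mul_le hKs' hK.card_le_cliqueNum

theorem ncard_commonNeighbors_add_one_le_card_darts [DecidableRel G.Adj] {H : Set V}
    [DecidablePred (· ∈ H)] {u v : V} (huv : G.Adj u v) (hu : u ∈ H) (hv : v ∉ H) :
    (G.commonNeighbors u v).ncard + 1 ≤ #{d : G.Dart | d.fst ∈ H ∧ d.snd ∉ H} := by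
  classical
  -- `x ∈ H` is hit by the dart `(x, v)`, `x ∉ H` by `(u, x)`, and `u` by `(u, v)`
  have hsub : insert u (G.commonNeighbors u v) ⊆
      (fun d : G.Dart => if d.snd = v then d.fst else d.snd) ''
        ↑({d : G.Dart | d.fst ∈ H ∧ d.snd ∉ H} : Finset G.Dart) := by
    rintro x (rfl | hx)
    · exact ⟨⟨(x, v), huv⟩, by simpa using ⟨hu, hv⟩, by simp⟩
    rw [mem_commonNeighbors] at hx
    by_cases hxH : x ∈ H
    · exact ⟨⟨(x, v), hx.2.symm⟩, by simpa using ⟨hxH, hv⟩, by simp⟩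
    · exact ⟨⟨(u, x), hx.1⟩, by simpa using ⟨hu, hxH⟩, by simp [hx.2.ne']⟩
  calc (G.commonNeighbors u v).ncard + 1 = (insert u (G.commonNeighbors u v)).ncard :=
        (Set.ncard_insert_of_notMem (fun h => G.irrefl h.1) (Set.toFinite _)).symm
    _ ≤ _ := Set.ncard_le_ncard hsub (Set.toFinite _)
    _ ≤ _ := Set.ncard_image_le (Set.toFinite _)
    _ = _ := Set.ncard_coe_finset _

theorem cliqueNum_mul_card_le (hG : G.Preconnected) (N : Finset (Set V))
    (hN : ∀ H ∈ N, IsMHalfspace G H ∧ H.Nonempty ∧ Hᶜ.Nonempty) :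
    G.cliqueNum * #N ≤ 4 * G.edgeSet.ncard * 2 ^ G.cliqueNum := by
  classical
  set ω := G.cliqueNum
  let r : Set V → G.Dart → Prop := fun H d => d.fst ∈ H ∧ d.snd ∉ H
  let w : G.Dart → ℚ := fun d => (G.commonNeighbors d.fst d.snd).ncard + 1
  have hcross : ∀ H ∈ N, (univ.bipartiteAbove r H).Nonempty := by
    intro H hH
    obtain ⟨-, ⟨a, ha⟩, ⟨b, hb⟩⟩ := hN H hH
    obtain ⟨d, -, hd⟩ := (hG a b).some.exists_boundary_dart H ha hb
    exact ⟨d, by simpa [bipartiteAbove, r] using hd⟩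
  have hcut : ∀ H ∈ N, ∀ d ∈ univ.bipartiteAbove r H,
      0 < w d ∧ w d ≤ #(univ.bipartiteAbove r H) := by
    intro H _ d hd
    simp only [mem_bipartiteAbove, mem_univ, true_and, r] at hd
    refine ⟨by positivity, ?_⟩
    simp only [w, bipartiteAbove, r]
    exact_mod_cast ncard_commonNeighbors_add_one_le_card_darts d.adj hd.1 hd.2
  have hdart : ∀ d : G.Dart, (ω : ℚ) * (#(N.bipartiteBelow r d) / w d) ≤ 2 * 2 ^ ω := by
    intro d
    have h : ((#(N.bipartiteBelow r d) * ω : ℕ) : ℚ) ≤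
        ((2 * ((G.commonNeighbors d.fst d.snd).ncard + 1) * 2 ^ ω : ℕ) : ℚ) := by
      exact_mod_cast card_filter_separating_mul_cliqueNum_le hG d.adj N fun H hH => (hN H hH).1
    rw [mul_div_assoc', div_le_iff₀ (by positivity)]
    push_cast at h
    linarith
  rw [← coe_edgeFinset, Set.ncard_coe_finset]
  have : (ω * #N : ℚ) ≤ 4 * #G.edgeFinset * 2 ^ ω := calc
    (ω * #N : ℚ) ≤ ω * ∑ d, #(N.bipartiteBelow r d) / w d :=
        mul_le_mul_of_nonneg_left (card_le_sum_card_bipartiteBelow_div r w hcross hcut)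
          (Nat.cast_nonneg _)
    _ ≤ ∑ _d : G.Dart, 2 * 2 ^ ω := by rw [mul_sum]; exact sum_le_sum fun d _ => hdart d
    _ = 4 * #G.edgeFinset * 2 ^ ω := by
        rw [sum_const, card_univ, dart_card_eq_twice_card_edges]; ring
  exact_mod_cast this

end SimpleGraph

/-- `ω(G)·(|ℋm(G)| − 2) ≤ 4·m·2^{ω(G)}`. -/
theorem card_mhalfspaces_le [Fintype V] (G : SimpleGraph V) (hG : G.Connected) :
    G.cliqueNum * ({H : Set V | IsMHalfspace G H}.ncard - 2) ≤
      4 * G.edgeSet.ncard * 2 ^ G.cliqueNum := by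
  classical
  set ℋ := {H : Set V | IsMHalfspace G H}
  have htriv : ({∅, Set.univ} : Set (Set V)).ncard ≤ 2 :=
    (Set.ncard_insert_le _ _).trans (by rw [Set.ncard_singleton])
  have hN : ∀ H ∈ (ℋ \ {∅, Set.univ}).toFinset, IsMHalfspace G H ∧ H.Nonempty ∧ Hᶜ.Nonempty := by
    intro H hH
    simp only [Set.mem_toFinset, Set.mem_sdiff, Set.mem_insert_iff, Set.mem_singleton_iff,
      not_or] at hH
    exact ⟨hH.1, Set.nonempty_iff_ne_empty.mpr hH.2.1, Set.nonempty_compl.mpr hH.2.2⟩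
  calc G.cliqueNum * (ℋ.ncard - 2) ≤ G.cliqueNum * (ℋ \ {∅, Set.univ}).ncard :=
        Nat.mul_le_mul_left _ ((Nat.sub_le_sub_left htriv _).trans (Set.le_ncard_sdiff _ _))
    _ = G.cliqueNum * #(ℋ \ {∅, Set.univ}).toFinset := by rw [Set.ncard_eq_toFinset_card']
    _ ≤ 4 * G.edgeSet.ncard * 2 ^ G.cliqueNum := cliqueNum_mul_card_le hG.preconnected _ hN
end

section
/- Let G = (V,E) be a finite simple connected graph, let H be a monophonic halfspace of G, and let C be an induced cycle of G on at least 5 vertices. Then C is monochromatic with respect to H: either all vertices of C lie in H, or all vertices of C lie in V∖H. -/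
open SimpleGraph

variable {V : Type*}

/-! If two non-adjacent vertices `x`, `y` of a chordless cycle lie on the same side of a
halfspace, the two arcs of the cycle between them are induced `x`–`y` paths, so convexity of
that side swallows the whole cycle. Hence, if the cycle meets both sides, each side meets it in
a clique. A chordless cycle of length at least four contains no triangle, so each side contains
at most two of its vertices and the cycle has length at most four. -/

lemma isInducedPath_iff {G : SimpleGraph V} {u v : V} (p : G.Walk u v) :
    IsInducedPath G p ↔ p.IsPath ∧ p.IsChordless := by
  rw [Walk.isChordless_iff_forall_mem_edges]
  rfl

namespace SimpleGraph.Walk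

variable {G : SimpleGraph V}

lemma IsChordless.reverse {u v : V} {p : G.Walk u v} (hp : p.IsChordless) :
    p.reverse.IsChordless := by
  refine isChordless_iff_forall_mem_edges.mpr fun a b ha hb hab => ?_
  rw [support_reverse, List.mem_reverse] at ha hb
  rw [edges_reverse, List.mem_reverse]
  exact hp.mem_edges ha hb hab

lemma IsChordless.rotate [DecidableEq V] {u v : V} {c : G.Walk v v} (hc : c.IsChordless)
    (hu : u ∈ c.support) : (c.rotate u hu).IsChordless := by
  refine isChordless_iff_forall_mem_edges.mpr fun a b ha hb hab => ?_
  rw [mem_support_rotate_iff] at ha hb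
  exact (rotate_edges c u hu).mem_iff.mpr (hc.mem_edges ha hb hab)

/-- A chord of `p` lying on `q` joins two common vertices of `p` and `q`. -/
lemma IsChordless.of_append_left {u v w s t : V} {p : G.Walk u v} {q : G.Walk v w}
    (h : (p.append q).IsChordless) (hpq : ∀ z ∈ p.support, z ∈ q.support → z = s ∨ z = t)
    (hst : ¬G.Adj s t) : p.IsChordless := by
  refine isChordless_iff_forall_mem_edges.mpr fun a b ha hb hab => ?_
  have he := h.mem_edges (p.support_subset_support_append_left q ha)
    (p.support_subset_support_append_left q hb) hab
  rw [edges_append, List.mem_append] at he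
  refine he.resolve_right fun he => hst ?_
  rcases hpq a ha (q.fst_mem_support_of_mem_edges he) with rfl | rfl <;>
    rcases hpq b hb (q.snd_mem_support_of_mem_edges he) with rfl | rfl
  all_goals first | exact absurd hab G.irrefl | exact hab | exact hab.symm

lemma IsChordless.of_append_right {u v w s t : V} {p : G.Walk u v} {q : G.Walk v w}
    (h : (p.append q).IsChordless) (hpq : ∀ z ∈ p.support, z ∈ q.support → z = s ∨ z = t)
    (hst : ¬G.Adj s t) : q.IsChordless := by
  have h' : (q.reverse.append p.reverse).IsChordless := reverse_append p q ▸ h.reverse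
  simpa using (h'.of_append_left (by simpa using fun z hq hp => hpq z hp hq) hst).reverse

lemma IsCycle.eq_or_eq_of_mem_takeUntil_of_mem_dropUntil [DecidableEq V] {x y z : V}
    {c : G.Walk x x} (hc : c.IsCycle) (hy : y ∈ c.support)
    (hzp : z ∈ (c.takeUntil y hy).support) (hzq : z ∈ (c.dropUntil y hy).support) :
    z = x ∨ z = y := by
  by_contra! hz
  have hcount := hc.count_support_of_mem (c.support_takeUntil_subset_support hy hzp) hz.1
  rw [← c.take_spec hy, support_append, List.count_append] at hcount
  rw [← cons_tail_support, List.mem_cons] at hzq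
  have := List.count_pos_iff.mpr hzp
  have := List.count_pos_iff.mpr (hzq.resolve_left hz.2)
  omega

/-- Splitting a chordless cycle at `x` and at a non-neighbour `y` gives two induced paths. -/
lemma IsCycle.mem_mInterval_of_start {x y z : V} {c : G.Walk x x} (hc : c.IsCycle)
    (hch : c.IsChordless) (hy : y ∈ c.support) (hxy : x ≠ y) (hnadj : ¬G.Adj x y)
    (hz : z ∈ c.support) : z ∈ mInterval G x y := by
  classical
  set p := c.takeUntil y hy
  set q := c.dropUntil y hy
  have hspec : p.append q = c := c.take_spec hy
  have hpq : ∀ z ∈ p.support, z ∈ q.support → z = x ∨ z = y := fun _ =>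
    hc.eq_or_eq_of_mem_takeUntil_of_mem_dropUntil hy
  have hch' : (p.append q).IsChordless := hspec ▸ hch
  have hq : q.IsPath := (hspec ▸ hc).isPath_of_append_right (not_nil_of_ne hxy)
  rw [← hspec, mem_support_append_iff] at hz
  rcases hz with hz | hz
  · exact ⟨hxy, p, (isInducedPath_iff p).mpr
      ⟨hc.isPath_takeUntil hy, hch'.of_append_left hpq hnadj⟩, hz⟩
  · exact ⟨hxy, q.reverse, (isInducedPath_iff _).mpr
      ⟨hq.reverse, (hch'.of_append_right hpq hnadj).reverse⟩, by simpa using hz⟩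

lemma IsCycle.mem_mInterval {u x y z : V} {c : G.Walk u u} (hc : c.IsCycle)
    (hch : c.IsChordless) (hx : x ∈ c.support) (hy : y ∈ c.support) (hxy : x ≠ y)
    (hnadj : ¬G.Adj x y) (hz : z ∈ c.support) : z ∈ mInterval G x y := by
  classical
  exact (hc.rotate hx).mem_mInterval_of_start (hch.rotate hx) ((mem_support_rotate_iff ..).mpr hy)
    hxy hnadj ((mem_support_rotate_iff ..).mpr hz)

lemma IsCycle.length_eq_three_of_adj_snd_penultimate {u : V} {c : G.Walk u u}
    (hc : c.IsCycle) (h : c.toSubgraph.Adj c.snd c.penultimate) : c.length = 3 := by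
  have h3 := hc.three_le_length
  have hmem : c.penultimate ∈ c.toSubgraph.neighborSet (c.getVert 1) := h
  rw [hc.neighborSet_toSubgraph_internal one_ne_zero (by omega)] at hmem
  rcases hmem with h0 | h2
  · rw [Nat.sub_self, getVert_zero] at h0
    have := (hc.getVert_endpoint_iff (by omega)).mp h0
    omega
  · have := hc.getVert_injOn (x₁ := c.length - 1) (x₂ := 1 + 1)
      ⟨by omega, by omega⟩ ⟨by omega, by omega⟩ h2
    omega

lemma IsCycle.length_eq_three {u a b d : V} {c : G.Walk u u} (hc : c.IsCycle)
    (hab : c.toSubgraph.Adj a b) (had : c.toSubgraph.Adj a d) (hbd : c.toSubgraph.Adj b d) :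
    c.length = 3 := by
  classical
  have ha : a ∈ c.support := c.mem_verts_toSubgraph.mp hab.fst_mem
  have hc' := hc.rotate ha
  rw [← c.length_rotate a ha]
  rw [← c.toSubgraph_rotate ha] at hab had hbd
  have hb : b ∈ (c.rotate a ha).toSubgraph.neighborSet a := hab
  have hd : d ∈ (c.rotate a ha).toSubgraph.neighborSet a := had
  rw [hc'.neighborSet_toSubgraph_endpoint] at hb hd
  rcases hb with rfl | rfl <;> rcases hd with rfl | rfl
  · exact absurd rfl hbd.ne
  · exact hc'.length_eq_three_of_adj_snd_penultimate hbd
  · exact hc'.length_eq_three_of_adj_snd_penultimate hbd.symm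
  · exact absurd rfl hbd.ne

lemma IsCycle.card_le_two_of_isClique {u : V} {c : G.Walk u u} (hc : c.IsCycle)
    (hch : c.IsChordless) (hlen : 4 ≤ c.length) {s : Finset V} (hs : ∀ x ∈ s, x ∈ c.support)
    (hcl : G.IsClique (s : Set V)) : s.card ≤ 2 := by
  by_contra! h
  obtain ⟨a, ha, b, hb, d, hd, hab, had, hbd⟩ := Finset.two_lt_card.mp h
  have adj : ∀ x ∈ s, ∀ y ∈ s, x ≠ y → c.toSubgraph.Adj x y := fun x hx y hy hxy =>
    adj_toSubgraph_iff_mem_edges.mpr (hch.mem_edges (hs x hx) (hs y hy) (hcl hx hy hxy))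
  have := hc.length_eq_three (adj a ha b hb hab) (adj a ha d hd had) (adj b hb d hd hbd)
  omega

lemma IsCycle.isClique_of_mConvex {u z : V} {c : G.Walk u u} (hc : c.IsCycle)
    (hch : c.IsChordless) {K : Set V} (hK : MConvex G K) (hz : z ∈ c.support) (hzK : z ∉ K) :
    G.IsClique {x | x ∈ c.support ∧ x ∈ K} := by
  rintro x ⟨hx, hxK⟩ y ⟨hy, hyK⟩ hxy
  by_contra hnadj
  exact hzK (hK x hxK y hyK (hc.mem_mInterval hch hx hy hxy hnadj hz))

lemma IsCycle.card_support_toFinset [DecidableEq V] {u : V} {c : G.Walk u u}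
    (hc : c.IsCycle) : c.support.toFinset.card = c.length := by
  have htail : c.support.toFinset = c.support.tail.toFinset := by
    rw [← cons_tail_support, List.toFinset_cons, List.tail_cons,
      Finset.insert_eq_of_mem (List.mem_toFinset.mpr (c.end_mem_tail_support hc.not_nil))]
  rw [htail, List.toFinset_card_of_nodup hc.support_nodup, List.length_tail, length_support]
  rfl

end SimpleGraph.Walk

theorem induced_long_cycle_monochromatic_general (G : SimpleGraph V)
    (H : Set V) (hH : IsMHalfspace G H)
    (w : V) (c : G.Walk w w) (hc : c.IsCycle)
    (hchordfree : ∀ a b : V, a ∈ c.support → b ∈ c.support → G.Adj a b →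
      s(a, b) ∈ c.edges)
    (hlen : 5 ≤ c.length) :
    (∀ x ∈ c.support, x ∈ H) ∨ (∀ x ∈ c.support, x ∉ H) := by
  classical
  have hch : c.IsChordless := Walk.isChordless_iff_forall_mem_edges.mpr fun a b => hchordfree a b
  by_contra! hmixed
  obtain ⟨⟨u, hu, huH⟩, v, hv, hvH⟩ := hmixed
  have hcolour : ∀ K : Set V, MConvex G K → ∀ z ∈ c.support, z ∉ K →
      (c.support.toFinset.filter (· ∈ K)).card ≤ 2 := fun K hK z hz hzK =>
    hc.card_le_two_of_isClique hch (by omega)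
      (fun _ hx => List.mem_toFinset.mp (Finset.mem_filter.mp hx).1)
      ((hc.isClique_of_mConvex hch hK hz hzK).subset (by simp))
  have hin := hcolour H hH.1 u hu huH
  have hout := hcolour Hᶜ hH.2 v hv (by simpa using hvH)
  have hsplit := c.support.toFinset.card_filter_add_card_filter_not (· ∈ H)
  simp only [Set.mem_compl_iff, hc.card_support_toFinset] at hout hsplit
  omega

/-- an induced cycle on at least 5 vertices is monochromatic with
respect to any monophonic halfspace `H`. -/
theorem induced_long_cycle_monochromatic [Fintype V] (G : SimpleGraph V)
    (hG : G.Connected) (H : Set V) (hH : IsMHalfspace G H)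
    (w : V) (c : G.Walk w w) (hc : c.IsCycle)
    (hchordfree : ∀ a b : V, a ∈ c.support → b ∈ c.support → G.Adj a b →
      s(a, b) ∈ c.edges)
    (hlen : 5 ≤ c.length) :
    (∀ x ∈ c.support, x ∈ H) ∨ (∀ x ∈ c.support, x ∉ H) :=
  induced_long_cycle_monochromatic_general G H hH w c hc hchordfree hlen
end
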